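/- arXiv:2102.09446 — 7 statements merged into one kernel-verified Lean document; each statement's English description precedes it below -/
import Mathlib

section
/- Let F be a k×p real matrix of rank p, let Σ_γ be a non-negative definite p×p matrix, let Σ_ε be a positive definite k×k matrix, and set V = F Σ_γ Fᵀ + Σ_ε and M = Fᵀ V⁻¹ F. Then M is invertible and M⁻¹ = (Fᵀ Σ_ε⁻¹ F)⁻¹ + Σ_γ. -/
/-!
Write `A = Fᵀ Σε⁻¹ F`. Substituting `F Σγ Fᵀ = V - Σε` into `M Σγ A = Fᵀ V⁻¹ (F Σγ Fᵀ) Σε⁻¹ F`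
gives `M Σγ A = A - M`, hence `M (A⁻¹ + Σγ) = 1`. Positivity is only needed to make `V`, `Σε`
and `A` invertible.
-/

open Matrix

theorem Matrix.mulVec_injective_of_rank_eq_card {K m n : Type*} [Field K] [Fintype m]
    [Fintype n] {A : Matrix m n K} (hA : A.rank = Fintype.card n) :
    Function.Injective A.mulVec := by
  rw [mulVec_injective_iff, linearIndependent_iff_card_eq_finrank_span, Set.finrank,
    ← rank_eq_finrank_span_cols, hA]

namespace Matrix

variable {R m n : Type*} [CommRing R] [Fintype m] [DecidableEq m] [Fintype n]

theorem mul_inv_mul_mul_mul_inv_mul_eq_sub {F : Matrix m n R} {G : Matrix n m R}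
    {S : Matrix n n R} {E V : Matrix m m R} (hV : IsUnit V.det) (hE : IsUnit E.det)
    (hVE : V = F * S * G + E) :
    G * V⁻¹ * F * S * (G * E⁻¹ * F) = G * E⁻¹ * F - G * V⁻¹ * F := by
  have hFSG : F * S * G = V - E := by rw [hVE, add_sub_cancel_right]
  calc G * V⁻¹ * F * S * (G * E⁻¹ * F) = G * V⁻¹ * (F * S * G) * E⁻¹ * F := by
        simp only [Matrix.mul_assoc]
    _ = G * (V⁻¹ * V) * E⁻¹ * F - G * V⁻¹ * (E * E⁻¹) * F := by
        rw [hFSG]; simp only [Matrix.mul_sub, Matrix.sub_mul, Matrix.mul_assoc]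
    _ = G * E⁻¹ * F - G * V⁻¹ * F := by
        rw [nonsing_inv_mul V hV, mul_nonsing_inv E hE, Matrix.mul_one, Matrix.mul_one]

theorem mul_inv_mul_mul_inv_mul_inv_add_eq_one [DecidableEq n] {F : Matrix m n R}
    {G : Matrix n m R} {S : Matrix n n R} {E V : Matrix m m R} (hV : IsUnit V.det)
    (hE : IsUnit E.det) (hA : IsUnit (G * E⁻¹ * F).det) (hVE : V = F * S * G + E) :
    G * V⁻¹ * F * ((G * E⁻¹ * F)⁻¹ + S) = 1 := by
  set A := G * E⁻¹ * F
  set M := G * V⁻¹ * F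
  have hMSA : M * S * A = A - M := mul_inv_mul_mul_mul_inv_mul_eq_sub hV hE hVE
  calc M * (A⁻¹ + S) = (M + M * S * A) * A⁻¹ := by
        rw [Matrix.add_mul, Matrix.mul_add, Matrix.mul_assoc (M * S), mul_nonsing_inv A hA,
          Matrix.mul_one]
    _ = 1 := by rw [hMSA, add_sub_cancel, mul_nonsing_inv A hA]

end Matrix

/-- **Lemma (Appendix).** If `F` is a `k × p` real matrix of rank `p`, `Σγ` is non-negative
definite, `Σε` is positive definite, `V = F Σγ Fᵀ + Σε` and `M = Fᵀ V⁻¹ F`, then `M` is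
invertible and `M⁻¹ = (Fᵀ Σε⁻¹ F)⁻¹ + Σγ`. -/
theorem stmt0 {k p : ℕ} (F : Matrix (Fin k) (Fin p) ℝ) (hF : F.rank = p)
    (Sγ : Matrix (Fin p) (Fin p) ℝ) (hSγ : Sγ.PosSemidef)
    (Sε : Matrix (Fin k) (Fin k) ℝ) (hSε : Sε.PosDef)
    (V : Matrix (Fin k) (Fin k) ℝ) (hV : V = F * Sγ * Fᵀ + Sε)
    (M : Matrix (Fin p) (Fin p) ℝ) (hM : M = Fᵀ * V⁻¹ * F) :
    IsUnit M.det ∧ M⁻¹ = (Fᵀ * Sε⁻¹ * F)⁻¹ + Sγ := by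
  have hFinj : Function.Injective F.mulVec :=
    mulVec_injective_of_rank_eq_card (by rw [hF, Fintype.card_fin])
  have hVpd : V.PosDef := by
    rw [hV, ← conjTranspose_eq_transpose_of_trivial]
    exact PosDef.posSemidef_add (hSγ.mul_mul_conjTranspose_same F) hSε
  have hApd : (Fᵀ * Sε⁻¹ * F).PosDef := by
    rw [← conjTranspose_eq_transpose_of_trivial]
    exact hSε.inv.conjTranspose_mul_mul_same hFinj
  have hMW : M * ((Fᵀ * Sε⁻¹ * F)⁻¹ + Sγ) = 1 := by
    rw [hM]
    exact mul_inv_mul_mul_inv_mul_inv_add_eq_one (isUnit_iff_isUnit_det _ |>.1 hVpd.isUnit)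
      (isUnit_iff_isUnit_det _ |>.1 hSε.isUnit) (isUnit_iff_isUnit_det _ |>.1 hApd.isUnit) hV
  exact ⟨isUnit_det_of_right_inverse hMW, inv_eq_right_inv hMW⟩
end

section
/- Let F₂ be a k×p₂ real matrix of rank p₂, Σ_γ a non-negative definite p₂×p₂ matrix, σ_ε > 0, and V = F₂ Σ_γ F₂ᵀ + σ_ε² I_k. Then V F₂ = F₂ (Σ_γ F₂ᵀ F₂ + σ_ε² I_{p₂}), and consequently the generalized least squares estimator matrix coincides with the ordinary least squares estimator matrix: (F₂ᵀ V⁻¹ F₂)⁻¹ F₂ᵀ V⁻¹ = (F₂ᵀ F₂)⁻¹ F₂ᵀ. -/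
open Matrix

/-!
`V F₂ = F₂ M` with `M = Σγ F₂ᵀF₂ + σε² I` says that `V` maps the column space of `F₂` into
itself. Once `V` and `M` are invertible this gives `V⁻¹ F₂ = F₂ M⁻¹`, hence (by symmetry of `V`)
`F₂ᵀ V⁻¹ = M⁻ᵀ F₂ᵀ`, and the factor `M⁻ᵀ` cancels from the GLS matrix. `V` is positive
definite; `M` is invertible because `Mx = 0` forces `(Gx)ᵀ Σγ (Gx) = -σε² xᵀ G x` for
`G = F₂ᵀF₂`, and both quadratic forms are nonnegative, so `Gx = 0` and then `x = 0`.
-/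

namespace Matrix

variable {m n : Type*} [Fintype m] [Fintype n] [DecidableEq m] [DecidableEq n]

theorem isUnit_posSemidef_mul_posSemidef_add_smul_one {S G : Matrix n n ℝ} (hS : S.PosSemidef)
    (hG : G.PosSemidef) {c : ℝ} (hc : 0 < c) : IsUnit (S * G + c • 1) := by
  rw [← mulVec_injective_iff_isUnit, ← coe_mulVecLin, injective_iff_map_eq_zero]
  intro x hx
  rw [coe_mulVecLin] at hx
  have hSGx : S *ᵥ (G *ᵥ x) = -c • x := by
    rw [add_mulVec, ← mulVec_mulVec, smul_mulVec, one_mulVec] at hx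
    exact (neg_smul c x).symm ▸ eq_neg_of_add_eq_zero_left hx
  have hquad : G *ᵥ x ⬝ᵥ S *ᵥ (G *ᵥ x) = -c * (x ⬝ᵥ G *ᵥ x) := by
    rw [hSGx, dotProduct_smul, smul_eq_mul, dotProduct_comm]
  have hGx : G *ᵥ x = 0 := by
    refine (hG.dotProduct_mulVec_zero_iff x).mp ?_
    have h1 := hS.dotProduct_mulVec_nonneg (G *ᵥ x)
    have h2 := hG.dotProduct_mulVec_nonneg x
    simp only [star_trivial] at h1 h2 ⊢
    nlinarith
  simpa [hGx, hc.ne'] using hSGx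

theorem transpose_mul_nonsing_inv_of_mul_eq_mul {R : Type*} [CommRing R] {V : Matrix m m R}
    {F : Matrix m n R} {M : Matrix n n R} (hVsymm : Vᵀ = V) (hV : IsUnit V) (hM : IsUnit M)
    (hVF : V * F = F * M) : Fᵀ * V⁻¹ = Mᵀ⁻¹ * Fᵀ := by
  have hVinv : V⁻¹ * F = F * M⁻¹ := by
    have := hV.invertible
    have := hM.invertible
    rw [inv_mul_eq_iff_eq_mul_of_invertible, ← Matrix.mul_assoc, hVF,
      mul_inv_cancel_right_of_invertible]
  simpa [transpose_nonsing_inv, hVsymm] using congrArg transpose hVinv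

theorem gls_eq_ols_of_mul_eq_mul {R : Type*} [CommRing R] {V : Matrix m m R}
    {F : Matrix m n R} {M : Matrix n n R} (hVsymm : Vᵀ = V) (hV : IsUnit V) (hM : IsUnit M)
    (hVF : V * F = F * M) : (Fᵀ * V⁻¹ * F)⁻¹ * Fᵀ * V⁻¹ = (Fᵀ * F)⁻¹ * Fᵀ := by
  have := (isUnit_transpose M).mpr hM |>.invertible
  rw [Matrix.mul_assoc, transpose_mul_nonsing_inv_of_mul_eq_mul hVsymm hV hM hVF,
    Matrix.mul_assoc, mul_inv_rev, inv_inv_of_invertible, Matrix.mul_assoc,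
    mul_inv_cancel_left_of_invertible]

end Matrix

theorem stmt4_general {k p₂ : ℕ} (F₂ : Matrix (Fin k) (Fin p₂) ℝ)
    (Sγ : Matrix (Fin p₂) (Fin p₂) ℝ) (hSγ : Sγ.PosSemidef)
    (σε : ℝ) (hσε : 0 < σε)
    (V : Matrix (Fin k) (Fin k) ℝ) (hV : V = F₂ * Sγ * F₂ᵀ + σε ^ 2 • 1) :
    V * F₂ = F₂ * (Sγ * (F₂ᵀ * F₂) + σε ^ 2 • 1) ∧
      (F₂ᵀ * V⁻¹ * F₂)⁻¹ * F₂ᵀ * V⁻¹ = (F₂ᵀ * F₂)⁻¹ * F₂ᵀ := by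
  have hVF : V * F₂ = F₂ * (Sγ * (F₂ᵀ * F₂) + σε ^ 2 • 1) := by
    simp only [hV, Matrix.add_mul, Matrix.mul_add, Matrix.smul_mul, Matrix.mul_smul,
      Matrix.one_mul, Matrix.mul_one, Matrix.mul_assoc]
  have hσ : 0 < σε ^ 2 := by positivity
  have hVpd : V.PosDef := by
    simpa only [hV, conjTranspose_eq_transpose_of_trivial] using
      PosDef.posSemidef_add (hSγ.mul_mul_conjTranspose_same F₂) (PosDef.one.smul hσ)
  have hGpsd : (F₂ᵀ * F₂).PosSemidef := by
    simpa only [conjTranspose_eq_transpose_of_trivial] using posSemidef_conjTranspose_mul_self F₂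
  refine ⟨hVF, gls_eq_ols_of_mul_eq_mul ?_ hVpd.isUnit
    (isUnit_posSemidef_mul_posSemidef_add_smul_one hSγ hGpsd hσ) hVF⟩
  simpa only [conjTranspose_eq_transpose_of_trivial] using hVpd.isHermitian.eq

/-- With `V = F₂ Σγ F₂ᵀ + σε² I` one has `V F₂ = F₂ (Σγ F₂ᵀ F₂ + σε² I)`, and consequently
the generalized least squares estimator matrix coincides with the ordinary least squares
estimator matrix: `(F₂ᵀ V⁻¹ F₂)⁻¹ F₂ᵀ V⁻¹ = (F₂ᵀ F₂)⁻¹ F₂ᵀ`. -/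
theorem stmt4 {k p₂ : ℕ} (F₂ : Matrix (Fin k) (Fin p₂) ℝ) (hF₂ : F₂.rank = p₂)
    (Sγ : Matrix (Fin p₂) (Fin p₂) ℝ) (hSγ : Sγ.PosSemidef)
    (σε : ℝ) (hσε : 0 < σε)
    (V : Matrix (Fin k) (Fin k) ℝ) (hV : V = F₂ * Sγ * F₂ᵀ + σε ^ 2 • 1) :
    V * F₂ = F₂ * (Sγ * (F₂ᵀ * F₂) + σε ^ 2 • 1) ∧
      (F₂ᵀ * V⁻¹ * F₂)⁻¹ * F₂ᵀ * V⁻¹ = (F₂ᵀ * F₂)⁻¹ * F₂ᵀ :=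
  stmt4_general F₂ Sγ hSγ σε hσε V hV
end

section
/- Let σ₁ > 0, σ₂ > 0, 0 ≤ ρ ≤ 1, δ₂ > 0 and δ₁ < y₀, and define h(t) = (δ₂ t + δ₁ − y₀)/√(σ₁² + 2ρσ₁σ₂ t + σ₂² t²) for t ≥ 0. Then for every real z with −(y₀ − δ₁)/σ₁ < z < δ₂/σ₂ there exists exactly one t > 0 with h(t) = z; i.e. every α-quantile t_α of the failure time distribution with z_α in this range is a non-degenerate, uniquely determined positive solution of h(t_α) = z_α. -/
/-!
Writing `h(t) = (a t + b) / √(p + q t + r t²)`, the quotient rule gives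
`h'(t) = (a (2p + q t) − b (q + 2 r t)) / (2 (p + q t + r t²)^{3/2})`, which is positive
for `t > 0` when `a > 0`, `b ≤ 0` and `p > 0`, `q, r ≥ 0`. So `h` is strictly increasing on
`[0, ∞)`, and by the intermediate value theorem it maps `(0, ∞)` onto the interval between
`h(0) = b / √p` and `lim_{t → ∞} h(t) = a / √r`.
-/

open Real Set Filter Topology

noncomputable def linearDivSqrtQuadratic (a b p q r t : ℝ) : ℝ :=
  (a * t + b) / √(p + q * t + r * t ^ 2)

section

variable {a b p q r : ℝ}

lemma quadratic_pos_of_nonneg (hp : 0 < p) (hq : 0 ≤ q) (hr : 0 ≤ r) {t : ℝ} (ht : 0 ≤ t) :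
    0 < p + q * t + r * t ^ 2 := by
  positivity

lemma continuousOn_linearDivSqrtQuadratic (hp : 0 < p) (hq : 0 ≤ q) (hr : 0 ≤ r) :
    ContinuousOn (linearDivSqrtQuadratic a b p q r) (Ici 0) := by
  unfold linearDivSqrtQuadratic
  refine ContinuousOn.div (by fun_prop) (by fun_prop) fun t ht => ?_
  exact (sqrt_pos.2 (quadratic_pos_of_nonneg hp hq hr ht)).ne'

lemma hasDerivAt_linearDivSqrtQuadratic {t : ℝ} (hQ : 0 < p + q * t + r * t ^ 2) :
    HasDerivAt (linearDivSqrtQuadratic a b p q r)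
      ((a * (2 * p + q * t) - b * (q + 2 * r * t)) /
        (2 * (p + q * t + r * t ^ 2) * √(p + q * t + r * t ^ 2))) t := by
  have hs : 0 < √(p + q * t + r * t ^ 2) := sqrt_pos.2 hQ
  have hnum : HasDerivAt (fun t => a * t + b) a t :=
    (((hasDerivAt_id t).const_mul a).add_const b).congr_deriv (mul_one a)
  have hquad : HasDerivAt (fun t => p + q * t + r * t ^ 2) (q + 2 * r * t) t :=
    ((((hasDerivAt_id t).const_mul q).const_add p).add
      ((hasDerivAt_pow 2 t).const_mul r)).congr_deriv (by norm_num; ring)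
  refine (hnum.div (hquad.sqrt hQ.ne') hs.ne').congr_deriv ?_
  set Q := p + q * t + r * t ^ 2
  have hsq : √Q ^ 2 = Q := sq_sqrt hQ.le
  rw [hsq]
  field_simp
  linear_combination 2 * a * hsq

lemma strictMonoOn_linearDivSqrtQuadratic (ha : 0 < a) (hb : b ≤ 0) (hp : 0 < p) (hq : 0 ≤ q)
    (hr : 0 ≤ r) : StrictMonoOn (linearDivSqrtQuadratic a b p q r) (Ici 0) := by
  refine strictMonoOn_of_deriv_pos (convex_Ici 0) (continuousOn_linearDivSqrtQuadratic hp hq hr)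
    fun t ht => ?_
  rw [interior_Ici, mem_Ioi] at ht
  have hQ := quadratic_pos_of_nonneg hp hq hr (le_of_lt ht)
  rw [(hasDerivAt_linearDivSqrtQuadratic hQ).deriv]
  have hbt : b * (q + 2 * r * t) ≤ 0 := mul_nonpos_of_nonpos_of_nonneg hb (by positivity)
  have hat : 0 < a * (2 * p + q * t) := by positivity
  exact div_pos (by linarith) (by positivity)

lemma tendsto_linearDivSqrtQuadratic_nhdsGT_zero (hp : 0 < p) (hq : 0 ≤ q) (hr : 0 ≤ r) :
    Tendsto (linearDivSqrtQuadratic a b p q r) (𝓝[>] 0) (𝓝 (b / √p)) := by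
  have h := (continuousOn_linearDivSqrtQuadratic (a := a) (b := b) hp hq hr).continuousWithinAt
    (self_mem_Ici (a := (0 : ℝ)))
  simpa [linearDivSqrtQuadratic] using h.mono_left (nhdsWithin_mono 0 Ioi_subset_Ici_self)

lemma tendsto_linearDivSqrtQuadratic_atTop (hr : 0 < r) :
    Tendsto (linearDivSqrtQuadratic a b p q r) atTop (𝓝 (a / √r)) := by
  have hcont : ContinuousAt (fun u => (a + b * u) / √(p * u ^ 2 + q * u + r)) 0 := by
    refine ContinuousAt.div (by fun_prop) (by fun_prop) ?_
    simpa using (sqrt_pos.2 hr).ne'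
  have hlim := hcont.tendsto.comp tendsto_inv_atTop_zero
  simp only [Function.comp_def, mul_zero, add_zero, zero_pow two_ne_zero, zero_add] at hlim
  refine hlim.congr' ((eventually_gt_atTop 0).mono fun t ht => ?_)
  have hscale : p + q * t + r * t ^ 2 = t ^ 2 * (p * t⁻¹ ^ 2 + q * t⁻¹ + r) := by
    field_simp
  rw [linearDivSqrtQuadratic, hscale, sqrt_mul (sq_nonneg t), sqrt_sq ht.le]
  field_simp

lemma existsUnique_pos_linearDivSqrtQuadratic_eq (ha : 0 < a) (hb : b ≤ 0) (hp : 0 < p)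
    (hq : 0 ≤ q) (hr : 0 < r) {z : ℝ} (hz : z ∈ Ioo (b / √p) (a / √r)) :
    ∃! t, 0 < t ∧ linearDivSqrtQuadratic a b p q r t = z := by
  obtain ⟨t, ht, rfl⟩ := isPreconnected_Ioi.intermediate_value_Ioo (l₁ := 𝓝[>] 0) inf_le_right
    (le_principal_iff.2 (Ioi_mem_atTop 0))
    ((continuousOn_linearDivSqrtQuadratic hp hq hr.le).mono Ioi_subset_Ici_self)
    (tendsto_linearDivSqrtQuadratic_nhdsGT_zero hp hq hr.le)
    (tendsto_linearDivSqrtQuadratic_atTop hr) hz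
  refine ⟨t, ⟨ht, rfl⟩, fun s ⟨hs, hst⟩ => ?_⟩
  exact (strictMonoOn_linearDivSqrtQuadratic ha hb hp hq hr.le).injOn
    (mem_Ici_of_Ioi hs) (mem_Ici_of_Ioi ht) hst

end

theorem stmt8_general (σ₁ σ₂ ρ δ₁ δ₂ y₀ : ℝ) (h₁ : 0 < σ₁) (h₂ : 0 < σ₂)
    (hρ₀ : 0 ≤ ρ) (hδ₂ : 0 < δ₂) (hδ₁ : δ₁ < y₀)
    (z : ℝ) (hz₁ : -(y₀ - δ₁) / σ₁ < z) (hz₂ : z < δ₂ / σ₂) :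
    ∃! t : ℝ, 0 < t ∧
      (δ₂ * t + δ₁ - y₀) / Real.sqrt (σ₁ ^ 2 + 2 * ρ * σ₁ * σ₂ * t + σ₂ ^ 2 * t ^ 2) = z := by
  have hz : z ∈ Ioo ((δ₁ - y₀) / √(σ₁ ^ 2)) (δ₂ / √(σ₂ ^ 2)) := by
    rw [sqrt_sq h₁.le, sqrt_sq h₂.le, ← neg_sub]
    exact ⟨hz₁, hz₂⟩
  simpa only [linearDivSqrtQuadratic, add_sub_assoc] using
    existsUnique_pos_linearDivSqrtQuadratic_eq hδ₂ (sub_nonpos.2 hδ₁.le) (pow_pos h₁ 2)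
      (by positivity) (pow_pos h₂ 2) hz

/-- For `σ₁, σ₂ > 0`, `0 ≤ ρ ≤ 1`, `δ₂ > 0` and `δ₁ < y₀`, and
`h(t) = (δ₂ t + δ₁ − y₀)/√(σ₁² + 2ρσ₁σ₂ t + σ₂² t²)`: for every `z` with
`−(y₀ − δ₁)/σ₁ < z < δ₂/σ₂` there exists exactly one `t > 0` with `h(t) = z`. -/
theorem stmt8 (σ₁ σ₂ ρ δ₁ δ₂ y₀ : ℝ) (h₁ : 0 < σ₁) (h₂ : 0 < σ₂)
    (hρ₀ : 0 ≤ ρ) (hρ₁ : ρ ≤ 1) (hδ₂ : 0 < δ₂) (hδ₁ : δ₁ < y₀)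
    (z : ℝ) (hz₁ : -(y₀ - δ₁) / σ₁ < z) (hz₂ : z < δ₂ / σ₂) :
    ∃! t : ℝ, 0 < t ∧
      (δ₂ * t + δ₁ - y₀) / Real.sqrt (σ₁ ^ 2 + 2 * ρ * σ₁ * σ₂ * t + σ₂ ^ 2 * t ^ 2) = z :=
  stmt8_general σ₁ σ₂ ρ δ₁ δ₂ y₀ h₁ h₂ hρ₀ hδ₂ hδ₁ z hz₁ hz₂
end

section
/- (Proposition 2.) Let Σ_γ be a non-negative definite p₂×p₂ matrix and c ∈ ℝ^{p₂}. For j = 1, 2 let F_j be a k_j×p₂ real matrix of rank p₂ and Σ_{ε,j} a positive definite k_j×k_j matrix, and define M_j = F_jᵀ (F_j Σ_γ F_jᵀ + Σ_{ε,j})⁻¹ F_j and M_j⁰ = F_jᵀ Σ_{ε,j}⁻¹ F_j. Then cᵀ M_j⁻¹ c = cᵀ (M_j⁰)⁻¹ c + cᵀ Σ_γ c for j = 1, 2, and consequently cᵀ M₁⁻¹ c ≤ cᵀ M₂⁻¹ c if and only if cᵀ (M₁⁰)⁻¹ c ≤ cᵀ (M₂⁰)⁻¹ c. Hence a time plan is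 optimal for minimizing the c-criterion in the mixed effects marginal model for the time variable if and only if it is c-optimal in the corresponding fixed effect marginal model with error covariance Σ_ε, i.e., a time plan that is c-optimal for extrapolation at the median failure time t₀.₅ in the fixed effect model minimizes the asymptotic variance for estimating t₀.₅. -/
/-!
The key step is the push-through identity `V Σε⁻¹ F M⁰⁻¹ = F (M⁰⁻¹ + Σγ)` for
`V = F Σγ Fᵀ + Σε` and `M⁰ = Fᵀ Σε⁻¹ F`, which shows that `M⁰⁻¹ + Σγ` is the inverse of
`M = Fᵀ V⁻¹ F`. Hence `cᵀ M⁻¹ c` differs from `cᵀ M⁰⁻¹ c` by `cᵀ Σγ c`, a shift that does not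
depend on the time plan, so comparisons between plans are the same in both models.
Positive definiteness of `Σε` and full column rank of `F` make `V` and `M⁰` invertible.
-/

open Matrix

namespace Matrix

theorem mulVec_injective_of_rank_eq_card_s10 {m n K : Type*} [Fintype n] [Field K]
    (A : Matrix m n K) (hA : A.rank = Fintype.card n) : Function.Injective A.mulVec := by
  have hdim := LinearMap.finrank_range_add_finrank_ker A.mulVecLin
  rw [← Matrix.rank, hA, Module.finrank_fintype_fun_eq_card] at hdim
  have hker : LinearMap.ker A.mulVecLin = ⊥ :=
    Submodule.finrank_eq_zero.mp (by omega)
  exact LinearMap.ker_eq_bot.mp hker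

variable {m n : Type*} [Fintype m] [Fintype n] [DecidableEq m] [DecidableEq n]

theorem inv_mul_inv_add_mul_mul_mul {R : Type*} [CommRing R]
    (A : Matrix n m R) (F : Matrix m n R) (G : Matrix n n R) (S : Matrix m m R)
    (hS : IsUnit S.det) (hV : IsUnit (F * G * A + S).det) (hM : IsUnit (A * S⁻¹ * F).det) :
    (A * (F * G * A + S)⁻¹ * F)⁻¹ = (A * S⁻¹ * F)⁻¹ + G := by
  set V := F * G * A + S
  set M := A * S⁻¹ * F
  have push_through : V * (S⁻¹ * F * M⁻¹) = F * (M⁻¹ + G) := by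
    calc V * (S⁻¹ * F * M⁻¹) = F * G * (M * M⁻¹) + S * S⁻¹ * (F * M⁻¹) := by
          simp only [V, M, Matrix.add_mul, Matrix.mul_assoc]
      _ = F * (M⁻¹ + G) := by
          rw [mul_nonsing_inv _ hM, mul_nonsing_inv _ hS, Matrix.mul_one, Matrix.one_mul,
            Matrix.mul_add, add_comm]
  refine inv_eq_right_inv ?_
  calc A * V⁻¹ * F * (M⁻¹ + G) = A * (V⁻¹ * (V * (S⁻¹ * F * M⁻¹))) := by
        rw [push_through]; simp only [Matrix.mul_assoc]
    _ = M * M⁻¹ := by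
        rw [nonsing_inv_mul_cancel_left _ _ hV]; simp only [M, Matrix.mul_assoc]
    _ = 1 := mul_nonsing_inv _ hM

theorem inv_transpose_mul_inv_add_mul_mul {Sγ : Matrix n n ℝ} (hSγ : Sγ.PosSemidef)
    {F : Matrix m n ℝ} (hF : F.rank = Fintype.card n) {Sε : Matrix m m ℝ} (hSε : Sε.PosDef) :
    (Fᵀ * (F * Sγ * Fᵀ + Sε)⁻¹ * F)⁻¹ = (Fᵀ * Sε⁻¹ * F)⁻¹ + Sγ := by
  have hV : (F * Sγ * Fᵀ + Sε).PosDef := by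
    simpa using PosDef.posSemidef_add (hSγ.mul_mul_conjTranspose_same F) hSε
  have hM : (Fᵀ * Sε⁻¹ * F).PosDef := by
    simpa using hSε.inv.conjTranspose_mul_mul_same (F.mulVec_injective_of_rank_eq_card_s10 hF)
  exact inv_mul_inv_add_mul_mul_mul Fᵀ F Sγ Sε ((isUnit_iff_isUnit_det _).mp hSε.isUnit)
    ((isUnit_iff_isUnit_det _).mp hV.isUnit) ((isUnit_iff_isUnit_det _).mp hM.isUnit)

theorem dotProduct_mulVec_inv_transpose_mul_inv_add_mul_mul {Sγ : Matrix n n ℝ}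
    (hSγ : Sγ.PosSemidef) {F : Matrix m n ℝ} (hF : F.rank = Fintype.card n)
    {Sε : Matrix m m ℝ} (hSε : Sε.PosDef) (c : n → ℝ) :
    c ⬝ᵥ (Fᵀ * (F * Sγ * Fᵀ + Sε)⁻¹ * F)⁻¹ *ᵥ c =
      c ⬝ᵥ (Fᵀ * Sε⁻¹ * F)⁻¹ *ᵥ c + c ⬝ᵥ Sγ *ᵥ c := by
  rw [inv_transpose_mul_inv_add_mul_mul hSγ hF hSε, add_mulVec, dotProduct_add]

end Matrix

/-- **Proposition 2.** For two time plans with design matrices `F₁`, `F₂` (of full column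
rank) and error covariances `Σε₁`, `Σε₂`, the mixed-effects `c`-criterion decomposes as
`cᵀ Mⱼ⁻¹ c = cᵀ (Mⱼ⁰)⁻¹ c + cᵀ Σγ c`, where `Mⱼ = Fⱼᵀ(Fⱼ Σγ Fⱼᵀ + Σεⱼ)⁻¹Fⱼ` and
`Mⱼ⁰ = Fⱼᵀ Σεⱼ⁻¹ Fⱼ`; consequently `cᵀ M₁⁻¹ c ≤ cᵀ M₂⁻¹ c` iff
`cᵀ (M₁⁰)⁻¹ c ≤ cᵀ (M₂⁰)⁻¹ c`, i.e. a time plan is optimal in the mixed effects model iff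
it is `c`-optimal in the corresponding fixed effect model. -/
theorem stmt10 {p₂ k₁ k₂ : ℕ}
    (Sγ : Matrix (Fin p₂) (Fin p₂) ℝ) (hSγ : Sγ.PosSemidef) (c : Fin p₂ → ℝ)
    (F₁ : Matrix (Fin k₁) (Fin p₂) ℝ) (hF₁ : F₁.rank = p₂)
    (F₂ : Matrix (Fin k₂) (Fin p₂) ℝ) (hF₂ : F₂.rank = p₂)
    (Sε₁ : Matrix (Fin k₁) (Fin k₁) ℝ) (hSε₁ : Sε₁.PosDef)
    (Sε₂ : Matrix (Fin k₂) (Fin k₂) ℝ) (hSε₂ : Sε₂.PosDef) :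
    (c ⬝ᵥ (F₁ᵀ * (F₁ * Sγ * F₁ᵀ + Sε₁)⁻¹ * F₁)⁻¹ *ᵥ c =
        c ⬝ᵥ (F₁ᵀ * Sε₁⁻¹ * F₁)⁻¹ *ᵥ c + c ⬝ᵥ Sγ *ᵥ c) ∧
    (c ⬝ᵥ (F₂ᵀ * (F₂ * Sγ * F₂ᵀ + Sε₂)⁻¹ * F₂)⁻¹ *ᵥ c =
        c ⬝ᵥ (F₂ᵀ * Sε₂⁻¹ * F₂)⁻¹ *ᵥ c + c ⬝ᵥ Sγ *ᵥ c) ∧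
    (c ⬝ᵥ (F₁ᵀ * (F₁ * Sγ * F₁ᵀ + Sε₁)⁻¹ * F₁)⁻¹ *ᵥ c ≤
          c ⬝ᵥ (F₂ᵀ * (F₂ * Sγ * F₂ᵀ + Sε₂)⁻¹ * F₂)⁻¹ *ᵥ c ↔
        c ⬝ᵥ (F₁ᵀ * Sε₁⁻¹ * F₁)⁻¹ *ᵥ c ≤ c ⬝ᵥ (F₂ᵀ * Sε₂⁻¹ * F₂)⁻¹ *ᵥ c) := by
  have h₁ := dotProduct_mulVec_inv_transpose_mul_inv_add_mul_mul hSγ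
    (by rwa [Fintype.card_fin]) hSε₁ c
  have h₂ := dotProduct_mulVec_inv_transpose_mul_inv_add_mul_mul hSγ
    (by rwa [Fintype.card_fin]) hSε₂ c
  exact ⟨h₁, h₂, by rw [h₁, h₂, add_le_add_iff_right]⟩
end

section
/- (Theorem 1.) Let g₁ : 𝒳 → ℝ^{p₁} and g₂ : 𝒯 → ℝ^{p₂} be regression functions and c₁ ∈ ℝ^{p₁}, c₂ ∈ ℝ^{p₂} nonzero vectors. Suppose ξ* is an approximate design on 𝒳 with invertible M₁(ξ*) minimizing c₁ᵀ M₁(ξ)⁻¹ c₁ over all approximate designs ξ on 𝒳 with invertible M₁(ξ), and τ* is an approximate design on 𝒯 with invertible M₂(τ*) minimizing c₂ᵀ M₂(τ)⁻¹ c₂ over all approximate designs τ on 𝒯 with invertible M₂(τ). Then the product design ζ* = ξ* ⊗ τ* minimizes (c₁ ⊗ c₂)ᵀ M(ζ)⁻¹ (c₁ ⊗ c₂) over all approximate designs ζ on 𝒳 × 𝒯 with invertible M(ζ), where M(ζ) = Σᵢ ηᵢ (g₁(xᵢ) ⊗ g₂(tᵢ))(g₁(xᵢ) ⊗ g₂(tᵢ))ᵀ,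 and the optimal value factorizes: (c₁ ⊗ c₂)ᵀ M(ζ*)⁻¹ (c₁ ⊗ c₂) = (c₁ᵀ M₁(ξ*)⁻¹ c₁)(c₂ᵀ M₂(τ*)⁻¹ c₂). In the destructive-testing model with one measurement per unit this says: if ξ* is c-optimal for extrapolation at the normal use condition x_u in the marginal model for the stress variables (g₁ = f₁, c₁ = f₁(x_u)) and τ* is c-optimal for extrapolation at t₀.₅ in the weighted marginal model for the time variable (g₂(t) = f₂(t)/σ(t), c₂ = f₂(t₀.₅)), then ζ* = ξ* ⊗ τ* is optimal for estimating the median failure time t₀.₅. -/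
/-!
By the equivalence theorem for `c`-optimality, a `c`-optimal design `ξ*` with information
matrix `M` satisfies `(g(x)ᵀ M⁻¹ c)² ≤ cᵀ M⁻¹ c` at every point `x`: compare `ξ*` with the
mixtures `(ξ* + t δₓ) / (1 + t)`, whose inverse information matrices are given by the
Sherman–Morrison formula, and let `t → 0`.

The product design has information matrix `M₁ ⊗ M₂`, so its criterion value is `v₁ v₂`,
where `vₖ = cₖᵀ Mₖ⁻¹ cₖ`. For any design `ζ`, Cauchy–Schwarz in the inner product of `M(ζ)`
gives `(dᵀ c)² ≤ (dᵀ M(ζ) d) (cᵀ M(ζ)⁻¹ c)` for every `d`. Take `d = M₁⁻¹ c₁ ⊗ M₂⁻¹ c₂`: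
then `dᵀ c = v₁ v₂`, and `dᵀ M(ζ) d` is an average of the values
`(g₁(x)ᵀ M₁⁻¹ c₁)² (g₂(t)ᵀ M₂⁻¹ c₂)²`, each at most `v₁ v₂` by the equivalence theorem
applied to both marginal designs. Hence `cᵀ M(ζ)⁻¹ c ≥ v₁ v₂`.
-/

open Matrix

/-- The information matrix `M(ξ) = Σᵢ wᵢ g(sᵢ) g(sᵢ)ᵀ` of an approximate design given by
points `s : Fin m → S` and weights `w : Fin m → ℝ` for a regression function `g`. -/
noncomputable def infoMat {S : Type*} {ι κ : Type*} [Fintype ι]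
    (g : S → κ → ℝ) (pts : ι → S) (w : ι → ℝ) : Matrix κ κ ℝ :=
  ∑ i, w i • vecMulVec (g (pts i)) (g (pts i))

open Kronecker Filter Topology

namespace Matrix

variable {K κ : Type*} [Field K] [Fintype κ] [DecidableEq κ]

theorem add_smul_vecMulVec_mul_eq_one {M : Matrix κ κ K} (hM : IsUnit M.det) (hMs : M.IsSymm)
    (g : κ → K) {t : K} (ht : 1 + t * (g ⬝ᵥ M⁻¹ *ᵥ g) ≠ 0) :
    (M + t • vecMulVec g g) *
      (M⁻¹ - (t / (1 + t * (g ⬝ᵥ M⁻¹ *ᵥ g))) • vecMulVec (M⁻¹ *ᵥ g) (M⁻¹ *ᵥ g)) = 1 := by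
  set u := g ⬝ᵥ M⁻¹ *ᵥ g
  set k := t / (1 + t * u)
  have hk : k * (1 + t * u) = t := div_mul_cancel₀ t ht
  have hMM : M * M⁻¹ = 1 := mul_nonsing_inv M hM
  have hgM : g ᵥ* M⁻¹ = M⁻¹ *ᵥ g := by
    rw [← vecMul_transpose, hMs.inv.eq]
  have h₁ : M * vecMulVec (M⁻¹ *ᵥ g) (M⁻¹ *ᵥ g) = vecMulVec g (M⁻¹ *ᵥ g) := by
    rw [mul_vecMulVec, mulVec_mulVec, hMM, one_mulVec]
  have h₂ : vecMulVec g g * M⁻¹ = vecMulVec g (M⁻¹ *ᵥ g) := by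
    rw [vecMulVec_mul, hgM]
  have h₃ : vecMulVec g g * vecMulVec (M⁻¹ *ᵥ g) (M⁻¹ *ᵥ g) = u • vecMulVec g (M⁻¹ *ᵥ g) := by
    rw [vecMulVec_mul_vecMulVec, vecMulVec_smul]
  calc (M + t • vecMulVec g g) * (M⁻¹ - k • vecMulVec (M⁻¹ *ᵥ g) (M⁻¹ *ᵥ g))
      = 1 + (t - k * (1 + t * u)) • vecMulVec g (M⁻¹ *ᵥ g) := by
        simp only [add_mul, mul_sub, Matrix.smul_mul, Matrix.mul_smul, hMM, h₁, h₂, h₃]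
        module
    _ = 1 := by rw [hk, sub_self, zero_smul, add_zero]

theorem isUnit_det_add_smul_vecMulVec {M : Matrix κ κ K} (hM : IsUnit M.det) (hMs : M.IsSymm)
    (g : κ → K) {t : K} (ht : 1 + t * (g ⬝ᵥ M⁻¹ *ᵥ g) ≠ 0) :
    IsUnit (M + t • vecMulVec g g).det :=
  isUnit_det_of_right_inverse (add_smul_vecMulVec_mul_eq_one hM hMs g ht)

theorem dotProduct_inv_add_smul_vecMulVec_mulVec {M : Matrix κ κ K} (hM : IsUnit M.det)
    (hMs : M.IsSymm) (g : κ → K) {t : K} (ht : 1 + t * (g ⬝ᵥ M⁻¹ *ᵥ g) ≠ 0) (c : κ → K) :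
    c ⬝ᵥ (M + t • vecMulVec g g)⁻¹ *ᵥ c =
      c ⬝ᵥ M⁻¹ *ᵥ c - t / (1 + t * (g ⬝ᵥ M⁻¹ *ᵥ g)) * (g ⬝ᵥ M⁻¹ *ᵥ c) ^ 2 := by
  have hgc : M⁻¹ *ᵥ g ⬝ᵥ c = g ⬝ᵥ M⁻¹ *ᵥ c := by
    rw [dotProduct_mulVec, ← vecMul_transpose, hMs.inv.eq]
  rw [inv_eq_right_inv (add_smul_vecMulVec_mul_eq_one hM hMs g ht), sub_mulVec, smul_mulVec,
    dotProduct_sub, dotProduct_smul, vecMulVec_mulVec, hgc]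
  simp [dotProduct_comm c (M⁻¹ *ᵥ g), hgc, sq]

end Matrix

namespace Matrix.PosSemidef

variable {κ : Type*} [Fintype κ]

theorem sq_dotProduct_mulVec_le {M : Matrix κ κ ℝ} (hM : M.PosSemidef) (a b : κ → ℝ) :
    (a ⬝ᵥ M *ᵥ b) ^ 2 ≤ (a ⬝ᵥ M *ᵥ a) * (b ⬝ᵥ M *ᵥ b) := by
  have hsymm : b ⬝ᵥ M *ᵥ a = a ⬝ᵥ M *ᵥ b := by
    rw [dotProduct_mulVec, ← mulVec_transpose, dotProduct_comm,
      (isHermitian_iff_isSymm.mp hM.isHermitian).eq]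
  have hquad : ∀ t : ℝ,
      0 ≤ (a ⬝ᵥ M *ᵥ a) * (t * t) + 2 * (a ⬝ᵥ M *ᵥ b) * t + b ⬝ᵥ M *ᵥ b := by
    intro t
    have h := hM.dotProduct_mulVec_nonneg (t • a + b)
    simp only [star_trivial, mulVec_add, mulVec_smul, dotProduct_add, add_dotProduct,
      smul_dotProduct, dotProduct_smul, smul_eq_mul, hsymm] at h
    linarith
  have := discrim_le_zero hquad
  rw [discrim] at this
  linarith

theorem sq_dotProduct_le_mul_dotProduct_inv_mulVec [DecidableEq κ] {N : Matrix κ κ ℝ}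
    (hN : N.PosSemidef) (hdet : IsUnit N.det) (d c : κ → ℝ) :
    (d ⬝ᵥ c) ^ 2 ≤ (d ⬝ᵥ N *ᵥ d) * (c ⬝ᵥ N⁻¹ *ᵥ c) := by
  have hc : N *ᵥ (N⁻¹ *ᵥ c) = c := by rw [mulVec_mulVec, mul_nonsing_inv N hdet, one_mulVec]
  have := hN.sq_dotProduct_mulVec_le d (N⁻¹ *ᵥ c)
  rwa [hc, dotProduct_comm (N⁻¹ *ᵥ c) c] at this

end Matrix.PosSemidef

section InfoMat

variable {S ι κ : Type*} [Fintype ι]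

theorem posSemidef_infoMat [Fintype κ] (g : S → κ → ℝ) (pts : ι → S) {w : ι → ℝ}
    (hw : ∀ i, 0 ≤ w i) :
    (infoMat g pts w).PosSemidef :=
  posSemidef_sum _ fun i _ => by
    simpa using (posSemidef_vecMulVec_self_star (g (pts i))).smul (hw i)

theorem dotProduct_infoMat_mulVec [Fintype κ] (g : S → κ → ℝ) (pts : ι → S) (w : ι → ℝ)
    (a : κ → ℝ) :
    a ⬝ᵥ infoMat g pts w *ᵥ a = ∑ i, w i * (g (pts i) ⬝ᵥ a) ^ 2 := by
  simp only [infoMat, sum_mulVec, dotProduct_sum, smul_mulVec, vecMulVec_mulVec,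
    dotProduct_smul]
  refine Finset.sum_congr rfl fun i _ => ?_
  simp [dotProduct_comm a, sq]

theorem dotProduct_infoMat_mulVec_le [Fintype κ] (g : S → κ → ℝ) (pts : ι → S) {w : ι → ℝ}
    (hw : ∀ i, 0 ≤ w i) (hw1 : ∑ i, w i = 1) {a : κ → ℝ} {C : ℝ}
    (hC : ∀ s, (g s ⬝ᵥ a) ^ 2 ≤ C) : a ⬝ᵥ infoMat g pts w *ᵥ a ≤ C :=
  calc a ⬝ᵥ infoMat g pts w *ᵥ a = ∑ i, w i * (g (pts i) ⬝ᵥ a) ^ 2 :=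
        dotProduct_infoMat_mulVec g pts w a
    _ ≤ ∑ i, w i * C := Finset.sum_le_sum fun i _ => mul_le_mul_of_nonneg_left (hC _) (hw i)
    _ = C := by rw [← Finset.sum_mul, hw1, one_mul]

theorem infoMat_smul (g : S → κ → ℝ) (pts : ι → S) (r : ℝ) (w : ι → ℝ) :
    infoMat g pts (r • w) = r • infoMat g pts w := by
  simp only [infoMat, Finset.smul_sum, Pi.smul_apply, smul_eq_mul, smul_smul]

theorem infoMat_snoc {m : ℕ} (g : S → κ → ℝ) (pts : Fin m → S) (x : S) (w : Fin m → ℝ)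
    (a : ℝ) :
    infoMat g (Fin.snoc pts x) (Fin.snoc w a) = infoMat g pts w + a • vecMulVec (g x) (g x) := by
  simp [infoMat, Fin.sum_univ_castSucc]

end InfoMat

section COptimality

variable {S κ : Type*} [Fintype κ] [DecidableEq κ]

def IsCOptimal {ι : Type*} [Fintype ι] (g : S → κ → ℝ) (c : κ → ℝ) (pts : ι → S)
    (w : ι → ℝ) : Prop :=
  ∀ {m' : ℕ} (pts' : Fin m' → S) (w' : Fin m' → ℝ), (∀ i, 0 < w' i) → ∑ i, w' i = 1 →
    IsUnit (infoMat g pts' w').det →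
    c ⬝ᵥ (infoMat g pts w)⁻¹ *ᵥ c ≤ c ⬝ᵥ (infoMat g pts' w')⁻¹ *ᵥ c

variable {m : ℕ} {g : S → κ → ℝ} {c : κ → ℝ} {pts : Fin m → S} {w : Fin m → ℝ}

theorem IsCOptimal.one_add_mul_sq_le (hopt : IsCOptimal g c pts w) (hw : ∀ i, 0 < w i)
    (hw1 : ∑ i, w i = 1) (hdet : IsUnit (infoMat g pts w).det) (x : S) {t : ℝ} (ht : 0 < t) :
    (1 + t) * (g x ⬝ᵥ (infoMat g pts w)⁻¹ *ᵥ c) ^ 2 ≤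
      (1 + t * (g x ⬝ᵥ (infoMat g pts w)⁻¹ *ᵥ g x)) * (c ⬝ᵥ (infoMat g pts w)⁻¹ *ᵥ c) := by
  set M := infoMat g pts w
  have hM : M.PosSemidef := posSemidef_infoMat g pts fun i => (hw i).le
  have hMs : M.IsSymm := isHermitian_iff_isSymm.mp hM.isHermitian
  set u := g x ⬝ᵥ M⁻¹ *ᵥ g x with hu_def
  have hu : 0 ≤ u := by simpa using hM.inv.dotProduct_mulVec_nonneg (g x)
  have hden : 0 < 1 + t * u := by positivity
  set A := M + t • vecMulVec (g x) (g x)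
  set w' : Fin (m + 1) → ℝ := (1 + t)⁻¹ • Fin.snoc w t
  have hw' : ∀ i, 0 < w' i := fun i => by
    refine mul_pos (by positivity) (Fin.lastCases ?_ (fun j => ?_) i) <;> simp [ht, hw]
  have hw'1 : ∑ i, w' i = 1 := by
    simp only [w', Pi.smul_apply, smul_eq_mul, ← Finset.mul_sum, Fin.sum_univ_castSucc,
      Fin.snoc_castSucc, Fin.snoc_last, hw1]
    field_simp
  have hinfo : infoMat g (Fin.snoc pts x) w' = (1 + t)⁻¹ • A := by
    rw [infoMat_smul, infoMat_snoc]
  have hAinv : A * A⁻¹ = 1 :=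
    mul_nonsing_inv A (isUnit_det_add_smul_vecMulVec hdet hMs _ hden.ne')
  have hright : infoMat g (Fin.snoc pts x) w' * ((1 + t) • A⁻¹) = 1 := by
    rw [hinfo, Matrix.smul_mul, Matrix.mul_smul, hAinv, smul_smul,
      inv_mul_cancel₀ (by positivity), one_smul]
  have hcmp := hopt _ _ hw' hw'1 (isUnit_det_of_right_inverse hright)
  rw [inv_eq_right_inv hright, smul_mulVec, dotProduct_smul, smul_eq_mul,
    dotProduct_inv_add_smul_vecMulVec_mulVec hdet hMs _ hden.ne'] at hcmp
  set s := g x ⬝ᵥ M⁻¹ *ᵥ c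
  set v := c ⬝ᵥ M⁻¹ *ᵥ c
  rw [← hu_def, div_mul_eq_mul_div, mul_sub, mul_div_assoc', le_sub_iff_add_le] at hcmp
  have hgain : (1 + t) * (t * s ^ 2) ≤ t * v * (1 + t * u) := by
    rw [← div_le_iff₀ hden]
    linarith
  exact le_of_mul_le_mul_left (by linarith) ht

/-- Necessity half of the Kiefer–Wolfowitz equivalence theorem for `c`-optimality. -/
theorem IsCOptimal.sq_dotProduct_inv_mulVec_le (hopt : IsCOptimal g c pts w)
    (hw : ∀ i, 0 < w i) (hw1 : ∑ i, w i = 1) (hdet : IsUnit (infoMat g pts w).det) (x : S) :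
    (g x ⬝ᵥ (infoMat g pts w)⁻¹ *ᵥ c) ^ 2 ≤ c ⬝ᵥ (infoMat g pts w)⁻¹ *ᵥ c := by
  set u := g x ⬝ᵥ (infoMat g pts w)⁻¹ *ᵥ g x
  set s := g x ⬝ᵥ (infoMat g pts w)⁻¹ *ᵥ c
  set v := c ⬝ᵥ (infoMat g pts w)⁻¹ *ᵥ c
  have hlhs : Tendsto (fun t => (1 + t) * s ^ 2) (𝓝[>] 0) (𝓝 (s ^ 2)) := by
    have h : Continuous fun t : ℝ => (1 + t) * s ^ 2 := by fun_prop
    simpa using (h.tendsto 0).mono_left nhdsWithin_le_nhds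
  have hrhs : Tendsto (fun t => (1 + t * u) * v) (𝓝[>] 0) (𝓝 v) := by
    have h : Continuous fun t : ℝ => (1 + t * u) * v := by fun_prop
    simpa using (h.tendsto 0).mono_left nhdsWithin_le_nhds
  exact le_of_tendsto_of_tendsto hlhs hrhs <| eventually_nhdsWithin_of_forall fun t ht =>
    hopt.one_add_mul_sq_le hw hw1 hdet x ht

end COptimality

section Kronecker

variable {R ι κ : Type*}

def kronVec [Mul R] (a : ι → R) (b : κ → R) : ι × κ → R := fun q => a q.1 * b q.2

variable [CommSemiring R] [Fintype ι] [Fintype κ]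

theorem dotProduct_kronVec (a c : ι → R) (b d : κ → R) :
    kronVec a b ⬝ᵥ kronVec c d = (a ⬝ᵥ c) * (b ⬝ᵥ d) := by
  simp only [kronVec, dotProduct, Fintype.sum_prod_type, Finset.sum_mul_sum]
  exact Finset.sum_congr rfl fun i _ => Finset.sum_congr rfl fun j _ => by ring

theorem kronecker_mulVec_kronVec (A : Matrix ι ι R) (B : Matrix κ κ R) (a : ι → R)
    (b : κ → R) : (A ⊗ₖ B) *ᵥ kronVec a b = kronVec (A *ᵥ a) (B *ᵥ b) := by
  ext q
  simp only [kronVec, mulVec, dotProduct, kroneckerMap_apply, Fintype.sum_prod_type,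
    Finset.sum_mul_sum]
  exact Finset.sum_congr rfl fun i _ => Finset.sum_congr rfl fun j _ => by ring

end Kronecker

section ProductDesign

variable {S₁ S₂ ι₁ ι₂ κ₁ κ₂ : Type*} [Fintype ι₁] [Fintype ι₂]

theorem infoMat_prod (g₁ : S₁ → κ₁ → ℝ) (g₂ : S₂ → κ₂ → ℝ) (pts₁ : ι₁ → S₁) (w₁ : ι₁ → ℝ)
    (pts₂ : ι₂ → S₂) (w₂ : ι₂ → ℝ) :
    infoMat (fun z => kronVec (g₁ z.1) (g₂ z.2)) (Prod.map pts₁ pts₂) (kronVec w₁ w₂) =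
      infoMat g₁ pts₁ w₁ ⊗ₖ infoMat g₂ pts₂ w₂ := by
  ext q r
  simp only [infoMat, kronVec, Matrix.sum_apply, Matrix.smul_apply, vecMulVec_apply,
    smul_eq_mul, kroneckerMap_apply, Prod.map_fst, Prod.map_snd, Fintype.sum_prod_type,
    Finset.sum_mul_sum]
  exact Finset.sum_congr rfl fun i _ => Finset.sum_congr rfl fun j _ => by ring

variable [Fintype κ₁] [Fintype κ₂] [DecidableEq κ₁] [DecidableEq κ₂]
  {g₁ : S₁ → κ₁ → ℝ} {g₂ : S₂ → κ₂ → ℝ} {pts₁ : ι₁ → S₁} {w₁ : ι₁ → ℝ}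
  {pts₂ : ι₂ → S₂} {w₂ : ι₂ → ℝ}

theorem isUnit_det_infoMat_prod (h₁ : IsUnit (infoMat g₁ pts₁ w₁).det)
    (h₂ : IsUnit (infoMat g₂ pts₂ w₂).det) :
    IsUnit (infoMat (fun z => kronVec (g₁ z.1) (g₂ z.2)) (Prod.map pts₁ pts₂)
      (kronVec w₁ w₂)).det := by
  rw [infoMat_prod, det_kronecker]
  exact (h₁.pow _).mul (h₂.pow _)

theorem dotProduct_inv_infoMat_prod_mulVec (c₁ : κ₁ → ℝ) (c₂ : κ₂ → ℝ) :
    kronVec c₁ c₂ ⬝ᵥ (infoMat (fun z => kronVec (g₁ z.1) (g₂ z.2))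
        (Prod.map pts₁ pts₂) (kronVec w₁ w₂))⁻¹ *ᵥ kronVec c₁ c₂ =
      (c₁ ⬝ᵥ (infoMat g₁ pts₁ w₁)⁻¹ *ᵥ c₁) * (c₂ ⬝ᵥ (infoMat g₂ pts₂ w₂)⁻¹ *ᵥ c₂) := by
  rw [infoMat_prod, inv_kronecker, kronecker_mulVec_kronVec, dotProduct_kronVec]

theorem IsCOptimal.prod {m l : ℕ} {c₁ : κ₁ → ℝ} {c₂ : κ₂ → ℝ} {pts₁ : Fin m → S₁}
    {w₁ : Fin m → ℝ} {pts₂ : Fin l → S₂} {w₂ : Fin l → ℝ} (h₁ : IsCOptimal g₁ c₁ pts₁ w₁)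
    (hw₁ : ∀ i, 0 < w₁ i) (hw₁1 : ∑ i, w₁ i = 1) (hdet₁ : IsUnit (infoMat g₁ pts₁ w₁).det)
    (h₂ : IsCOptimal g₂ c₂ pts₂ w₂) (hw₂ : ∀ j, 0 < w₂ j) (hw₂1 : ∑ j, w₂ j = 1)
    (hdet₂ : IsUnit (infoMat g₂ pts₂ w₂).det) :
    IsCOptimal (fun z => kronVec (g₁ z.1) (g₂ z.2)) (kronVec c₁ c₂) (Prod.map pts₁ pts₂)
      (kronVec w₁ w₂) := by
  intro ν zs η hη hη1 hdet
  set M₁ := infoMat g₁ pts₁ w₁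
  set M₂ := infoMat g₂ pts₂ w₂
  set N := infoMat (fun z => kronVec (g₁ z.1) (g₂ z.2)) zs η
  have hN : N.PosSemidef := posSemidef_infoMat _ zs fun i => (hη i).le
  have hM₁ : M₁.PosSemidef := posSemidef_infoMat g₁ pts₁ fun i => (hw₁ i).le
  have hv₁ : 0 ≤ c₁ ⬝ᵥ M₁⁻¹ *ᵥ c₁ := by simpa using hM₁.inv.dotProduct_mulVec_nonneg c₁
  have hq : 0 ≤ kronVec c₁ c₂ ⬝ᵥ N⁻¹ *ᵥ kronVec c₁ c₂ := by
    simpa using hN.inv.dotProduct_mulVec_nonneg (kronVec c₁ c₂)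
  set d := kronVec (M₁⁻¹ *ᵥ c₁) (M₂⁻¹ *ᵥ c₂)
  have hdc : d ⬝ᵥ kronVec c₁ c₂ = (c₁ ⬝ᵥ M₁⁻¹ *ᵥ c₁) * (c₂ ⬝ᵥ M₂⁻¹ *ᵥ c₂) := by
    rw [dotProduct_kronVec, dotProduct_comm, dotProduct_comm (M₂⁻¹ *ᵥ c₂)]
  have hdNd : d ⬝ᵥ N *ᵥ d ≤ (c₁ ⬝ᵥ M₁⁻¹ *ᵥ c₁) * (c₂ ⬝ᵥ M₂⁻¹ *ᵥ c₂) :=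
    dotProduct_infoMat_mulVec_le _ zs (fun i => (hη i).le) hη1 fun z => by
      rw [dotProduct_kronVec, mul_pow]
      exact mul_le_mul (h₁.sq_dotProduct_inv_mulVec_le hw₁ hw₁1 hdet₁ z.1)
        (h₂.sq_dotProduct_inv_mulVec_le hw₂ hw₂1 hdet₂ z.2) (sq_nonneg _) hv₁
  have hbound := hN.sq_dotProduct_le_mul_dotProduct_inv_mulVec hdet d (kronVec c₁ c₂)
  rw [hdc] at hbound
  rw [dotProduct_inv_infoMat_prod_mulVec]
  nlinarith

end ProductDesign

theorem stmt11_general {𝒳 𝒯 : Type*} {p₁ p₂ : ℕ}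
    (g₁ : 𝒳 → Fin p₁ → ℝ) (g₂ : 𝒯 → Fin p₂ → ℝ)
    (c₁ : Fin p₁ → ℝ) (c₂ : Fin p₂ → ℝ)
    {m : ℕ} (xs : Fin m → 𝒳) (ws : Fin m → ℝ)
    (hws : ∀ i, 0 < ws i) (hws1 : ∑ i, ws i = 1)
    (hξdet : IsUnit (infoMat g₁ xs ws).det)
    (hξopt : ∀ {m' : ℕ} (xs' : Fin m' → 𝒳) (ws' : Fin m' → ℝ),
      (∀ i, 0 < ws' i) → ∑ i, ws' i = 1 → IsUnit (infoMat g₁ xs' ws').det →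
      c₁ ⬝ᵥ (infoMat g₁ xs ws)⁻¹ *ᵥ c₁ ≤ c₁ ⬝ᵥ (infoMat g₁ xs' ws')⁻¹ *ᵥ c₁)
    {l : ℕ} (ts : Fin l → 𝒯) (ps : Fin l → ℝ)
    (hps : ∀ j, 0 < ps j) (hps1 : ∑ j, ps j = 1)
    (hτdet : IsUnit (infoMat g₂ ts ps).det)
    (hτopt : ∀ {l' : ℕ} (ts' : Fin l' → 𝒯) (ps' : Fin l' → ℝ),
      (∀ j, 0 < ps' j) → ∑ j, ps' j = 1 → IsUnit (infoMat g₂ ts' ps').det →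
      c₂ ⬝ᵥ (infoMat g₂ ts ps)⁻¹ *ᵥ c₂ ≤ c₂ ⬝ᵥ (infoMat g₂ ts' ps')⁻¹ *ᵥ c₂) :
    IsUnit (infoMat (fun (z : 𝒳 × 𝒯) (q : Fin p₁ × Fin p₂) => g₁ z.1 q.1 * g₂ z.2 q.2)
        (fun ij : Fin m × Fin l => (xs ij.1, ts ij.2))
        (fun ij : Fin m × Fin l => ws ij.1 * ps ij.2)).det ∧
    (∀ {ν : ℕ} (zs : Fin ν → 𝒳 × 𝒯) (ηs : Fin ν → ℝ),
      (∀ i, 0 < ηs i) → ∑ i, ηs i = 1 →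
      IsUnit (infoMat (fun (z : 𝒳 × 𝒯) (q : Fin p₁ × Fin p₂) => g₁ z.1 q.1 * g₂ z.2 q.2)
        zs ηs).det →
      (fun q : Fin p₁ × Fin p₂ => c₁ q.1 * c₂ q.2) ⬝ᵥ
          (infoMat (fun (z : 𝒳 × 𝒯) (q : Fin p₁ × Fin p₂) => g₁ z.1 q.1 * g₂ z.2 q.2)
            (fun ij : Fin m × Fin l => (xs ij.1, ts ij.2))
            (fun ij : Fin m × Fin l => ws ij.1 * ps ij.2))⁻¹ *ᵥ
          (fun q : Fin p₁ × Fin p₂ => c₁ q.1 * c₂ q.2) ≤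
      (fun q : Fin p₁ × Fin p₂ => c₁ q.1 * c₂ q.2) ⬝ᵥ
          (infoMat (fun (z : 𝒳 × 𝒯) (q : Fin p₁ × Fin p₂) => g₁ z.1 q.1 * g₂ z.2 q.2)
            zs ηs)⁻¹ *ᵥ
          (fun q : Fin p₁ × Fin p₂ => c₁ q.1 * c₂ q.2)) ∧
    (fun q : Fin p₁ × Fin p₂ => c₁ q.1 * c₂ q.2) ⬝ᵥ
        (infoMat (fun (z : 𝒳 × 𝒯) (q : Fin p₁ × Fin p₂) => g₁ z.1 q.1 * g₂ z.2 q.2)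
          (fun ij : Fin m × Fin l => (xs ij.1, ts ij.2))
          (fun ij : Fin m × Fin l => ws ij.1 * ps ij.2))⁻¹ *ᵥ
        (fun q : Fin p₁ × Fin p₂ => c₁ q.1 * c₂ q.2) =
      (c₁ ⬝ᵥ (infoMat g₁ xs ws)⁻¹ *ᵥ c₁) * (c₂ ⬝ᵥ (infoMat g₂ ts ps)⁻¹ *ᵥ c₂) :=
  ⟨isUnit_det_infoMat_prod hξdet hτdet,
    IsCOptimal.prod hξopt hws hws1 hξdet hτopt hps hps1 hτdet,
    dotProduct_inv_infoMat_prod_mulVec c₁ c₂⟩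

/-- **Theorem 1.** If `ξ*` is `c`-optimal for `c₁` in the marginal model `g₁` on `𝒳` and
`τ*` is `c`-optimal for `c₂` in the marginal model `g₂` on `𝒯`, then the product design
`ζ* = ξ* ⊗ τ*` is `c`-optimal for `c₁ ⊗ c₂` in the product-type model
`g(x,t) = g₁(x) ⊗ g₂(t)` on `𝒳 × 𝒯` among all approximate designs with invertible
information matrix, and the optimal value factorizes:
`(c₁ ⊗ c₂)ᵀ M(ζ*)⁻¹ (c₁ ⊗ c₂) = (c₁ᵀ M₁(ξ*)⁻¹ c₁)(c₂ᵀ M₂(τ*)⁻¹ c₂)`. -/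
theorem stmt11 {𝒳 𝒯 : Type*} {p₁ p₂ : ℕ}
    (g₁ : 𝒳 → Fin p₁ → ℝ) (g₂ : 𝒯 → Fin p₂ → ℝ)
    (c₁ : Fin p₁ → ℝ) (hc₁ : c₁ ≠ 0) (c₂ : Fin p₂ → ℝ) (hc₂ : c₂ ≠ 0)
    {m : ℕ} (xs : Fin m → 𝒳) (ws : Fin m → ℝ)
    (hws : ∀ i, 0 < ws i) (hws1 : ∑ i, ws i = 1)
    (hξdet : IsUnit (infoMat g₁ xs ws).det)
    (hξopt : ∀ {m' : ℕ} (xs' : Fin m' → 𝒳) (ws' : Fin m' → ℝ),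
      (∀ i, 0 < ws' i) → ∑ i, ws' i = 1 → IsUnit (infoMat g₁ xs' ws').det →
      c₁ ⬝ᵥ (infoMat g₁ xs ws)⁻¹ *ᵥ c₁ ≤ c₁ ⬝ᵥ (infoMat g₁ xs' ws')⁻¹ *ᵥ c₁)
    {l : ℕ} (ts : Fin l → 𝒯) (ps : Fin l → ℝ)
    (hps : ∀ j, 0 < ps j) (hps1 : ∑ j, ps j = 1)
    (hτdet : IsUnit (infoMat g₂ ts ps).det)
    (hτopt : ∀ {l' : ℕ} (ts' : Fin l' → 𝒯) (ps' : Fin l' → ℝ),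
      (∀ j, 0 < ps' j) → ∑ j, ps' j = 1 → IsUnit (infoMat g₂ ts' ps').det →
      c₂ ⬝ᵥ (infoMat g₂ ts ps)⁻¹ *ᵥ c₂ ≤ c₂ ⬝ᵥ (infoMat g₂ ts' ps')⁻¹ *ᵥ c₂) :
    IsUnit (infoMat (fun (z : 𝒳 × 𝒯) (q : Fin p₁ × Fin p₂) => g₁ z.1 q.1 * g₂ z.2 q.2)
        (fun ij : Fin m × Fin l => (xs ij.1, ts ij.2))
        (fun ij : Fin m × Fin l => ws ij.1 * ps ij.2)).det ∧
    (∀ {ν : ℕ} (zs : Fin ν → 𝒳 × 𝒯) (ηs : Fin ν → ℝ),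
      (∀ i, 0 < ηs i) → ∑ i, ηs i = 1 →
      IsUnit (infoMat (fun (z : 𝒳 × 𝒯) (q : Fin p₁ × Fin p₂) => g₁ z.1 q.1 * g₂ z.2 q.2)
        zs ηs).det →
      (fun q : Fin p₁ × Fin p₂ => c₁ q.1 * c₂ q.2) ⬝ᵥ
          (infoMat (fun (z : 𝒳 × 𝒯) (q : Fin p₁ × Fin p₂) => g₁ z.1 q.1 * g₂ z.2 q.2)
            (fun ij : Fin m × Fin l => (xs ij.1, ts ij.2))
            (fun ij : Fin m × Fin l => ws ij.1 * ps ij.2))⁻¹ *ᵥ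
          (fun q : Fin p₁ × Fin p₂ => c₁ q.1 * c₂ q.2) ≤
      (fun q : Fin p₁ × Fin p₂ => c₁ q.1 * c₂ q.2) ⬝ᵥ
          (infoMat (fun (z : 𝒳 × 𝒯) (q : Fin p₁ × Fin p₂) => g₁ z.1 q.1 * g₂ z.2 q.2)
            zs ηs)⁻¹ *ᵥ
          (fun q : Fin p₁ × Fin p₂ => c₁ q.1 * c₂ q.2)) ∧
    (fun q : Fin p₁ × Fin p₂ => c₁ q.1 * c₂ q.2) ⬝ᵥ
        (infoMat (fun (z : 𝒳 × 𝒯) (q : Fin p₁ × Fin p₂) => g₁ z.1 q.1 * g₂ z.2 q.2)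
          (fun ij : Fin m × Fin l => (xs ij.1, ts ij.2))
          (fun ij : Fin m × Fin l => ws ij.1 * ps ij.2))⁻¹ *ᵥ
        (fun q : Fin p₁ × Fin p₂ => c₁ q.1 * c₂ q.2) =
      (c₁ ⬝ᵥ (infoMat g₁ xs ws)⁻¹ *ᵥ c₁) * (c₂ ⬝ᵥ (infoMat g₂ ts ps)⁻¹ *ᵥ c₂) :=
  stmt11_general g₁ g₂ c₁ c₂ xs ws hws hws1 hξdet hξopt ts ps hps hps1 hτdet hτopt
end

section
/- Consider simple linear regression f(x) = (1, x)ᵀ on the design region 𝒳 = [0, 1] and a use condition x_u < 0. The two-point design ξ* which assigns weight w* = |x_u|/(1 + 2|x_u|) to x = 1 and weight 1 − w* = (1 + |x_u|)/(1 + 2|x_u|) to x = 0 has invertible information matrix and attains f(x_u)ᵀ M(ξ*)⁻¹ f(x_u) = (1 + 2|x_u|)²; moreover, for every approximate design ξ on [0, 1] with invertible information matrix M(ξ), f(x_u)ᵀ M(ξ)⁻¹ f(x_u) ≥ (1 + 2|x_u|)². Hence ξ* is c-optimal for extrapolation of the mean response at x_u. -/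
/-!
In moment form `M(ξ) = !![1, s; s, q]` with `s = Σ wᵢ xᵢ` and `q = Σ wᵢ xᵢ²`, so
`Φ_c(ξ) = (q - 2 s x_u + x_u²) / (q - s²)`. Points in `[0,1]` give `s² ≤ q ≤ s`, and with
`t = |x_u|` the bound is the identity
`(q + 2 s t + t²) - (1 + 2t)² (q - s²) = 4 t (1 + t) (s - q) + ((1 + 2t) s - t)²`.
Both terms vanish exactly when `q = s = t / (1 + 2t)`, which is the two-point design on `{0, 1}`.
-/

open Matrix

/-- The information matrix `M(ξ) = Σᵢ wᵢ f(xᵢ) f(xᵢ)ᵀ` of an approximate design on `[0,1]`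
for the simple linear regression `f(x) = (1, x)ᵀ`. -/
noncomputable def infoM {m : ℕ} (x : Fin m → ℝ) (w : Fin m → ℝ) :
    Matrix (Fin 2) (Fin 2) ℝ :=
  ∑ i, w i • vecMulVec ![1, x i] ![1, x i]

/-- Holds without invertibility: for a singular matrix `⁻¹` and `/` both return `0`. -/
theorem Matrix.dotProduct_inv_fin_two_mulVec {K : Type*} [Field K] (a b p r q : K) :
    ![a, b] ⬝ᵥ !![p, r; r, q]⁻¹ *ᵥ ![a, b] =
      (q * a ^ 2 - 2 * r * a * b + p * b ^ 2) / (p * q - r ^ 2) := by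
  rw [inv_def, det_fin_two_of, adjugate_fin_two_of, Ring.inverse_eq_inv', smul_mulVec,
    dotProduct_smul, mulVec_fin_two, vec2_dotProduct']
  simp only [of_apply, cons_val_zero, cons_val_one, cons_val_fin_one, smul_eq_mul]
  ring

lemma infoM_eq_moments {m : ℕ} (x w : Fin m → ℝ) :
    infoM x w = !![∑ i, w i, ∑ i, w i * x i; ∑ i, w i * x i, ∑ i, w i * x i ^ 2] := by
  ext i j
  fin_cases i <;> fin_cases j <;>
    simp [infoM, Matrix.sum_apply, sq]

theorem sq_sum_mul_le_sum_mul_sq {ι : Type*} (s : Finset ι) (w x : ι → ℝ) (hw : ∀ i ∈ s, 0 ≤ w i)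
    (hw1 : ∑ i ∈ s, w i = 1) : (∑ i ∈ s, w i * x i) ^ 2 ≤ ∑ i ∈ s, w i * x i ^ 2 := by
  simpa [hw1] using Finset.sum_sq_le_sum_mul_sum_of_sq_le_mul s hw
    (fun i hi => mul_nonneg (hw i hi) (sq_nonneg (x i))) (fun i _ => le_of_eq (by ring))

theorem sum_mul_sq_le_sum_mul {ι : Type*} (s : Finset ι) (w x : ι → ℝ) (hw : ∀ i ∈ s, 0 ≤ w i)
    (hx : ∀ i ∈ s, x i ∈ Set.Icc (0 : ℝ) 1) : ∑ i ∈ s, w i * x i ^ 2 ≤ ∑ i ∈ s, w i * x i :=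
  Finset.sum_le_sum fun i hi => mul_le_mul_of_nonneg_left
    (by nlinarith [(hx i hi).1, (hx i hi).2]) (hw i hi)

theorem one_add_two_mul_abs_sq_le (u s q : ℝ) (hu : u ≤ 0) (hqs : q ≤ s) (hsq : s ^ 2 < q) :
    (1 + 2 * |u|) ^ 2 ≤ (q - 2 * s * u + u ^ 2) / (q - s ^ 2) := by
  rw [abs_of_nonpos hu, le_div_iff₀ (sub_pos.2 hsq)]
  nlinarith [sq_nonneg ((1 - 2 * u) * s + u),
    mul_nonneg (by nlinarith : (0 : ℝ) ≤ u ^ 2 - u) (sub_nonneg.2 hqs)]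

lemma dotProduct_infoM_inv_mulVec {m : ℕ} (x w : Fin m → ℝ) (hw : ∑ i, w i = 1) (u : ℝ) :
    ![1, u] ⬝ᵥ (infoM x w)⁻¹ *ᵥ ![1, u] =
      (∑ i, w i * x i ^ 2 - 2 * (∑ i, w i * x i) * u + u ^ 2) /
        (∑ i, w i * x i ^ 2 - (∑ i, w i * x i) ^ 2) := by
  rw [infoM_eq_moments, hw, dotProduct_inv_fin_two_mulVec]
  ring_nf

lemma infoM_two_point (b : ℝ) : infoM ![0, 1] ![1 - b, b] = !![1, b; b, b] := by
  rw [infoM_eq_moments]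
  simp [Fin.sum_univ_two]

/-- For simple linear regression on `[0,1]` and a use condition `x_u < 0`, the two-point
design with weight `w* = |x_u|/(1+2|x_u|)` at `x = 1` and `1 − w*` at `x = 0` has invertible
information matrix, attains the `c`-criterion value `(1+2|x_u|)²` for extrapolation at `x_u`,
and every approximate design with invertible information matrix has criterion value at least
`(1+2|x_u|)²`; hence this design is `c`-optimal for extrapolation at `x_u`. -/
theorem stmt12 (xu : ℝ) (hxu : xu < 0) :
    IsUnit (infoM ![0, 1] ![(1 + |xu|) / (1 + 2 * |xu|), |xu| / (1 + 2 * |xu|)]).det ∧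
    ![1, xu] ⬝ᵥ (infoM ![0, 1] ![(1 + |xu|) / (1 + 2 * |xu|), |xu| / (1 + 2 * |xu|)])⁻¹ *ᵥ
        ![1, xu] = (1 + 2 * |xu|) ^ 2 ∧
    ∀ {m : ℕ} (x : Fin m → ℝ) (w : Fin m → ℝ),
      (∀ i, x i ∈ Set.Icc (0 : ℝ) 1) → (∀ i, 0 < w i) → ∑ i, w i = 1 →
      IsUnit (infoM x w).det →
      (1 + 2 * |xu|) ^ 2 ≤ ![1, xu] ⬝ᵥ (infoM x w)⁻¹ *ᵥ ![1, xu] := by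
  obtain ⟨t, ht, rfl⟩ : ∃ t, 0 < t ∧ xu = -t := ⟨-xu, neg_pos.2 hxu, (neg_neg xu).symm⟩
  rw [abs_neg, abs_of_pos ht]
  have hd : 0 < 1 + 2 * t := by linarith
  have hb0 : 0 < t / (1 + 2 * t) := div_pos ht hd
  have hb1 : t / (1 + 2 * t) < 1 := (div_lt_one hd).2 (by linarith)
  rw [show (1 + t) / (1 + 2 * t) = 1 - t / (1 + 2 * t) by field_simp; ring, infoM_two_point,
    det_fin_two_of]
  refine ⟨isUnit_iff_ne_zero.2 (by nlinarith), ?_, fun x w hx hw hw1 hdet => ?_⟩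
  · rw [dotProduct_inv_fin_two_mulVec]
    field_simp
    rw [div_eq_iff (by linarith)]
    ring
  · have hs := sq_sum_mul_le_sum_mul_sq Finset.univ w x (fun i _ => (hw i).le) hw1
    have hq := sum_mul_sq_le_sum_mul Finset.univ w x (fun i _ => (hw i).le) (fun i _ => hx i)
    have hsq : (∑ i, w i * x i) ^ 2 < ∑ i, w i * x i ^ 2 := by
      refine hs.lt_of_ne fun h => hdet.ne_zero ?_
      rw [infoM_eq_moments, det_fin_two_of, hw1, ← h]
      ring
    rw [dotProduct_infoM_inv_mulVec x w hw1]
    simpa [abs_of_pos ht] using one_add_two_mul_abs_sq_le (-t) _ _ (neg_nonpos.2 ht.le) hq hsq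
end

section
/- Consider simple linear regression f(x) = (1, x)ᵀ on [0,1], a use condition x_u ≤ 0, and for m ≥ 2 the uniform design ξ̄_m assigning equal weight 1/m to each of the m equally spaced points 0, 1/(m−1), 2/(m−1), …, 1. Then the information matrix M(ξ̄_m) is invertible and the c-criterion for extrapolation at x_u equals Φ_c(ξ̄_m) = f(x_u)ᵀ M(ξ̄_m)⁻¹ f(x_u) = 1 + a_m (1 + 2|x_u|)², where a_m = 3(m−1)/(m+1). -/
open Matrix

/-- The information matrix of the uniform design `ξ̄_m` assigning weight `1/m` to each of
the `m` equally spaced points `0, 1/(m−1), …, 1` for simple linear regression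
`f(x) = (1, x)ᵀ` on `[0,1]`. -/
noncomputable def uniformInfoM (m : ℕ) : Matrix (Fin 2) (Fin 2) ℝ :=
  ∑ i : Fin m, ((m : ℝ)⁻¹) •
    vecMulVec ![1, (i : ℝ) / ((m : ℝ) - 1)] ![1, (i : ℝ) / ((m : ℝ) - 1)]

/-!
The information matrix of any design for `f(x) = (1, x)ᵀ` is the moment matrix
`!![1, μ; μ, s]` of the design, with mean `μ` and second moment `s`. Inverting it gives
`f(x)ᵀ M⁻¹ f(x) = 1 + (x - μ)² / (s - μ²)`, a shifted and rescaled square of the distance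
from `x` to the mean. For the uniform grid, `μ = 1/2` and the variance `s - μ²` equals
`(m + 1) / (12 (m - 1))`, so the criterion is `1 + 3 (m - 1)/(m + 1) · (1 - 2 x_u)²`, and
`1 - 2 x_u = 1 + 2 |x_u|` for `x_u ≤ 0`.
-/

theorem sum_fin_val_cast (m : ℕ) : ∑ i : Fin m, (i : ℝ) = m * (m - 1) / 2 := by
  induction m with
  | zero => simp
  | succ n ih =>
    rw [Fin.sum_univ_castSucc]
    simp only [Fin.val_castSucc, ih, Fin.val_last]
    push_cast; ring

theorem sum_fin_val_cast_sq (m : ℕ) :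
    ∑ i : Fin m, (i : ℝ) ^ 2 = m * (m - 1) * (2 * m - 1) / 6 := by
  induction m with
  | zero => simp
  | succ n ih =>
    rw [Fin.sum_univ_castSucc]
    simp only [Fin.val_castSucc, ih, Fin.val_last]
    push_cast; ring

theorem sum_smul_vecMulVec_one_cons {ι : Type*} (s : Finset ι) (w x : ι → ℝ) :
    ∑ i ∈ s, w i • vecMulVec ![1, x i] ![1, x i] =
      !![∑ i ∈ s, w i, ∑ i ∈ s, w i * x i; ∑ i ∈ s, w i * x i, ∑ i ∈ s, w i * x i ^ 2] := by
  ext a b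
  fin_cases a <;> fin_cases b <;> simp [Matrix.sum_apply, sq]

theorem det_momentMatrix (μ s : ℝ) : !![1, μ; μ, s].det = s - μ ^ 2 := by
  rw [det_fin_two_of]; ring

theorem dotProduct_inv_momentMatrix_mulVec (μ s x : ℝ) (hvar : s - μ ^ 2 ≠ 0) :
    ![1, x] ⬝ᵥ !![1, μ; μ, s]⁻¹ *ᵥ ![1, x] = 1 + (x - μ) ^ 2 / (s - μ ^ 2) := by
  rw [inv_def, adjugate_fin_two_of, det_momentMatrix, Ring.inverse_eq_inv']
  simp only [mulVec, dotProduct, Fin.sum_univ_two, smul_of, of_apply, cons_val_zero,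
    cons_val_one, cons_val_fin_one, Pi.smul_apply, smul_eq_mul]
  field_simp
  ring

theorem uniformInfoM_eq (m : ℕ) (hm : 2 ≤ m) :
    uniformInfoM m = !![1, 1 / 2; 1 / 2, (2 * (m : ℝ) - 1) / (6 * ((m : ℝ) - 1))] := by
  have hm' : (2 : ℝ) ≤ m := by exact_mod_cast hm
  have hm0 : (m : ℝ) ≠ 0 := by positivity
  have hm1 : (m : ℝ) - 1 ≠ 0 := by linarith
  rw [uniformInfoM, sum_smul_vecMulVec_one_cons]
  simp only [Finset.sum_const, Finset.card_univ, Fintype.card_fin, nsmul_eq_mul, div_pow,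
    ← Finset.mul_sum, ← Finset.sum_div, sum_fin_val_cast, sum_fin_val_cast_sq]
  congr 2 <;> field_simp

/-- For simple linear regression on `[0,1]`, a use condition `x_u ≤ 0` and `m ≥ 2`, the
uniform design on the equidistant `m`-point grid has invertible information matrix and
`c`-criterion value `Φ_c(ξ̄_m) = 1 + a_m (1 + 2|x_u|)²` for extrapolation at `x_u`, where
`a_m = 3(m−1)/(m+1)`. -/
theorem stmt15 (xu : ℝ) (hxu : xu ≤ 0) (m : ℕ) (hm : 2 ≤ m) :
    IsUnit (uniformInfoM m).det ∧
      ![1, xu] ⬝ᵥ (uniformInfoM m)⁻¹ *ᵥ ![1, xu] =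
        1 + (3 * ((m : ℝ) - 1) / ((m : ℝ) + 1)) * (1 + 2 * |xu|) ^ 2 := by
  have hm' : (2 : ℝ) ≤ m := by exact_mod_cast hm
  have hm1 : (m : ℝ) - 1 ≠ 0 := by linarith
  have hvar : (2 * (m : ℝ) - 1) / (6 * ((m : ℝ) - 1)) - (1 / 2) ^ 2
      = ((m : ℝ) + 1) / (12 * ((m : ℝ) - 1)) := by
    field_simp
    ring
  have hvar_ne : (2 * (m : ℝ) - 1) / (6 * ((m : ℝ) - 1)) - (1 / 2) ^ 2 ≠ 0 := by
    have : (0 : ℝ) < m - 1 := by linarith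
    rw [hvar]
    positivity
  rw [uniformInfoM_eq m hm, det_momentMatrix, dotProduct_inv_momentMatrix_mulVec _ _ _ hvar_ne]
  refine ⟨hvar_ne.isUnit, ?_⟩
  rw [hvar, abs_of_nonpos hxu]
  field_simp
  ring
end
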